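/- Let G be a DAG and let (𝒢,s,t,d) be its flow reduction (each vertex v split into v^in, v^out with a demand-1 edge, plus edges (s,v^in), (v^out,t) of demand 0 and (u^out,v^in) of demand 0 for each edge (u,v) of G). Then for every path cover 𝒫 of G of size ℓ there is a flow of (𝒢,s,t,d) of size ℓ, and conversely every flow of size ℓ yields a path cover of G of size ℓ. In particular, the width of G equals the minimum flow size of (𝒢,s,t,d). -/

import Mathlib

open Finset

section Prelude

variable {V : Type*}

/-- A (directed) path in the graph with edge relation `E`: nonempty, consecutive
vertices joined by edges, and vertices pairwise distinct. -/
def IsPathOn (E : V → V → Prop) (p : List V) : Prop :=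
  p ≠ [] ∧ p.Chain' E ∧ p.Nodup

/-- Reachability in the graph with edge relation `E`. -/
def Reaches (E : V → V → Prop) : V → V → Prop := Relation.ReflTransGen E

/-- The edges of a path, as the list of consecutive pairs of vertices. -/
def pathEdges (p : List V) : List (V × V) := p.zip p.tail

/-- A path cover: a multiset of paths such that every vertex is on some path. -/
def IsPathCover (E : V → V → Prop) (P : Multiset (List V)) : Prop :=
  (∀ p ∈ P, IsPathOn E p) ∧ ∀ v : V, ∃ p ∈ P, v ∈ p

/-- The width of a graph: the minimum size of a path cover. -/
noncomputable def gwidth (E : V → V → Prop) : ℕ :=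
  sInf {n | ∃ P : Multiset (List V), IsPathCover E P ∧ Multiset.card P = n}

/-- A DAG: no proper (directed) cycles. -/
def IsDAG (E : V → V → Prop) : Prop := ∀ v, ¬ Relation.TransGen E v v

/-- The edge relation of a finite edge set. -/
def edgeRel (E : Finset (V × V)) : V → V → Prop := fun a b => (a, b) ∈ E

/-- Multiplicity of an edge with respect to a multiset of paths. -/
def mult [DecidableEq V] (P : Multiset (List V)) (e : V × V) : ℕ :=
  Multiset.countP (fun p => e ∈ pathEdges p) P

/-- A flow network: a finite edge set, source, sink, and lower bounds (demands). -/
structure FlowNet (V : Type*) where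
  E : Finset (V × V)
  s : V
  t : V
  d : V × V → ℕ

/-- A flow: supported on edges, satisfying the demands, and flow conservation at
every vertex other than the source and the sink. -/
def IsFlow [Fintype V] (N : FlowNet V) (f : V × V → ℕ) : Prop :=
  (∀ e, e ∉ N.E → f e = 0) ∧ (∀ e ∈ N.E, N.d e ≤ f e) ∧
  ∀ v : V, v ≠ N.s → v ≠ N.t → (∑ u : V, f (u, v)) = ∑ u : V, f (v, u)

/-- The size of a flow: net outflow at the source. -/
def flowSize [Fintype V] (N : FlowNet V) (f : V × V → ℕ) : ℤ :=
  (∑ u : V, (f (N.s, u) : ℤ)) - ∑ u : V, (f (u, N.s) : ℤ)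

/-- An `st`-cut, given by the source side `S` (the sink side is the complement). -/
def IsCut (N : FlowNet V) (S : Set V) : Prop := N.s ∈ S ∧ N.t ∉ S

/-- A one-way cut: a cut with no edge crossing from `T = Sᶜ` to `S`. -/
def IsOwCut (N : FlowNet V) (S : Set V) : Prop :=
  IsCut N S ∧ ∀ e ∈ N.E, e.1 ∉ S → e.2 ∉ S

open Classical in
/-- The demand of a cut: sum of demands of edges crossing from `S` to `T`. -/
noncomputable def cutDemand (N : FlowNet V) (S : Set V) : ℕ :=
  ∑ e ∈ N.E.filter (fun e => e.1 ∈ S ∧ e.2 ∉ S), N.d e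

open Classical in
/-- The net flow across a cut: flow from `S` to `T` minus flow from `T` to `S`. -/
noncomputable def cutFlow (N : FlowNet V) (S : Set V) (f : V × V → ℕ) : ℤ :=
  (∑ e ∈ N.E.filter (fun e => e.1 ∈ S ∧ e.2 ∉ S), (f e : ℤ))
    - ∑ e ∈ N.E.filter (fun e => e.1 ∉ S ∧ e.2 ∈ S), (f e : ℤ)

/-- The residual graph of a network w.r.t. a flow `f`: reverse edges of all edges,
plus the edges whose flow strictly exceeds the demand. -/
def ResidualEdge (N : FlowNet V) (f : V × V → ℕ) (u v : V) : Prop :=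
  (v, u) ∈ N.E ∨ ((u, v) ∈ N.E ∧ N.d (u, v) < f (u, v))

/-- Vertices of the flow reduction: two copies of each vertex, plus source/sink. -/
abbrev FR (V : Type*) := (V ⊕ V) ⊕ Bool

def vinF (v : V) : FR V := Sum.inl (Sum.inl v)
def voutF (v : V) : FR V := Sum.inl (Sum.inr v)
def fsrc : FR V := Sum.inr false
def fsnk : FR V := Sum.inr true

/-- Demands of the flow reduction: `1` on each edge `(vin v, vout v)`, else `0`. -/
def redD [DecidableEq V] : FR V × FR V → ℕ
  | (Sum.inl (Sum.inl a), Sum.inl (Sum.inr b)) => if a = b then 1 else 0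
  | _ => 0

/-- The flow reduction of the DAG with edge set `E`. -/
def redNet [Fintype V] [DecidableEq V] (E : Finset (V × V)) : FlowNet (FR V) where
  E := (univ.image fun v : V => (fsrc, vinF v)) ∪ (univ.image fun v : V => (voutF v, fsnk))
        ∪ (univ.image fun v : V => (vinF v, voutF v))
        ∪ (E.image fun e => (voutF e.1, vinF e.2))
  s := fsrc
  t := fsnk
  d := redD

/-- The layered cut `L^{≤ l}`: the source together with all split vertices of level `≤ l`. -/
def layerCut (ℓ : FR V → ℤ) (l : ℤ) : Set (FR V) :=
  {x | x = fsrc ∨ ((∃ v : V, x = vinF v ∨ x = voutF v) ∧ ℓ x ≤ l)}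

open Classical in
/-- The layered antichain `A^l`. -/
noncomputable def layerAntichain [Fintype V] (ℓ : FR V → ℤ) (l : ℤ) : Finset V :=
  univ.filter (fun v => ℓ (vinF v) ≤ l ∧ l < ℓ (voutF v))

end Prelude

/-!
A path `v₁ … vₖ` of `G` lifts to the `s`–`t` path `s, v₁ⁱⁿ, v₁ᵒᵘᵗ, …, vₖⁱⁿ, vₖᵒᵘᵗ, t` of the
reduction. Summing the unit flows of the lifted paths of a cover gives a flow whose size is the
number of paths, and the demand on `(vⁱⁿ, vᵒᵘᵗ)` is met because `v` is covered.

Conversely, if a flow is nonzero then some edge `(s, vⁱⁿ)` carries flow: walking backwards along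
edges with positive flow must end at `s` because `G` is acyclic. Walking forwards from `vⁱⁿ` in the
same way reaches `t`, and subtracting the unit flow of this path leaves a smaller flow that
satisfies everything except the demands. By induction every flow is the sum of the unit flows of
lifted paths, and the demands say exactly that these paths cover `G`. Both constructions preserve
the size, so the width is the minimum flow size.
-/

lemma IsDAG.wellFounded {W : Type*} [Finite W] {r : W → W → Prop} (h : IsDAG r) :
    WellFounded r :=
  have : Std.Irrefl (Relation.TransGen r) := ⟨h⟩
  Subrelation.wf Relation.TransGen.single (Finite.wellFounded_of_trans_of_irrefl _)

lemma IsDAG.swap {W : Type*} {r : W → W → Prop} (h : IsDAG r) : IsDAG (Function.swap r) :=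
  fun v hv => h v (Relation.transGen_swap.1 hv)

lemma IsDAG.nodup_of_isChain {W : Type*} {r : W → W → Prop} (h : IsDAG r) {l : List W}
    (hl : l.IsChain r) : l.Nodup := by
  refine (List.isChain_iff_pairwise.1 (hl.imp fun _ _ => Relation.TransGen.single)).imp ?_
  rintro a _ hab rfl
  exact h a hab

section PathEdges

variable {W : Type*}

@[simp] lemma pathEdges_nil : pathEdges ([] : List W) = [] := rfl

@[simp] lemma pathEdges_singleton (a : W) : pathEdges [a] = [] := rfl

@[simp] lemma pathEdges_cons_cons (a b : W) (l : List W) :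
    pathEdges (a :: b :: l) = (a, b) :: pathEdges (b :: l) := rfl

lemma fst_mem_of_mem_pathEdges {l : List W} {e : W × W} (h : e ∈ pathEdges l) : e.1 ∈ l :=
  (List.of_mem_zip h).1

lemma List.IsChain.rel_of_mem_pathEdges {r : W → W → Prop} {l : List W} (hl : l.IsChain r)
    {e : W × W} (he : e ∈ pathEdges l) : r e.1 e.2 := by
  induction l using List.twoStepInduction with
  | nil => simp at he
  | singleton a => simp at he
  | cons_cons a b l _ ih =>
    rw [List.isChain_cons_cons] at hl
    rcases List.mem_cons.1 he with rfl | he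
    · exact hl.1
    · exact ih b hl.2 he

lemma List.Nodup.pathEdges {l : List W} (hl : l.Nodup) : (pathEdges l).Nodup := by
  induction l using List.twoStepInduction with
  | nil => simp
  | singleton a => simp
  | cons_cons a b l _ ih =>
    rw [List.nodup_cons] at hl
    exact List.nodup_cons.2 ⟨fun h => hl.1 (fst_mem_of_mem_pathEdges h), ih b hl.2⟩

end PathEdges

section WalkFlows

variable {W : Type*} [DecidableEq W]

def walkFlow (l : List W) (e : W × W) : ℕ := (pathEdges l).count e

def walksFlow (Q : Multiset (List W)) (e : W × W) : ℕ := (Q.map fun q => walkFlow q e).sum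

@[simp] lemma walksFlow_zero : walksFlow (0 : Multiset (List W)) = 0 := by
  ext e
  simp [walksFlow]

@[simp] lemma walksFlow_cons (q : List W) (Q : Multiset (List W)) :
    walksFlow (q ::ₘ Q) = walkFlow q + walksFlow Q := by
  ext e
  simp [walksFlow]

lemma walkFlow_pos_iff {l : List W} {e : W × W} : 0 < walkFlow l e ↔ e ∈ pathEdges l :=
  List.count_pos_iff

lemma walksFlow_pos_iff {Q : Multiset (List W)} {e : W × W} :
    0 < walksFlow Q e ↔ ∃ q ∈ Q, e ∈ pathEdges q := by
  simp [walksFlow, Nat.pos_iff_ne_zero, Multiset.sum_eq_zero_iff, ← walkFlow_pos_iff]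

lemma walkFlow_le {l : List W} (hl : l.Nodup) {f : W × W → ℕ}
    (hf : ∀ e ∈ pathEdges l, f e ≠ 0) : walkFlow l ≤ f := by
  intro e
  by_cases he : e ∈ pathEdges l
  · rw [walkFlow, List.count_eq_one_of_mem hl.pathEdges he]
    exact Nat.one_le_iff_ne_zero.2 (hf e he)
  · simp [walkFlow, List.count_eq_zero.2 he]

end WalkFlows

section NetOutflow

variable {W : Type*} [Fintype W]

def netOutflow (f : W × W → ℕ) (x : W) : ℤ := ∑ u, (f (x, u) : ℤ) - ∑ u, (f (u, x) : ℤ)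

lemma netOutflow_add (f g : W × W → ℕ) (x : W) :
    netOutflow (f + g) x = netOutflow f x + netOutflow g x := by
  simp only [netOutflow, Pi.add_apply, Nat.cast_add, Finset.sum_add_distrib]
  ring

lemma netOutflow_eq_zero_iff {f : W × W → ℕ} {x : W} :
    netOutflow f x = 0 ↔ ∑ u, f (u, x) = ∑ u, f (x, u) := by
  rw [netOutflow, sub_eq_zero, ← Nat.cast_sum, ← Nat.cast_sum, Nat.cast_inj, eq_comm]

/-- `IsFlow` without the demands; unlike flows, these are closed under subtracting a smaller
one. -/
def IsBalancedOn (N : FlowNet W) (f : W × W → ℕ) : Prop :=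
  (∀ e, e ∉ N.E → f e = 0) ∧ ∀ v, v ≠ N.s → v ≠ N.t → ∑ u, f (u, v) = ∑ u, f (v, u)

namespace IsBalancedOn

variable {N : FlowNet W} {f g : W × W → ℕ}

lemma zero : IsBalancedOn N 0 := ⟨fun _ _ => rfl, fun _ _ _ => rfl⟩

lemma add (hf : IsBalancedOn N f) (hg : IsBalancedOn N g) : IsBalancedOn N (f + g) := by
  refine ⟨fun e he => by simp [hf.1 e he, hg.1 e he], fun v hs ht => ?_⟩
  rw [← netOutflow_eq_zero_iff, netOutflow_add, netOutflow_eq_zero_iff.2 (hf.2 v hs ht),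
    netOutflow_eq_zero_iff.2 (hg.2 v hs ht), add_zero]

lemma tsub (hf : IsBalancedOn N f) (hg : IsBalancedOn N g) (hgf : g ≤ f) :
    IsBalancedOn N (f - g) := by
  refine ⟨fun e he => by simp [hf.1 e he], fun v hs ht => ?_⟩
  have hsplit := netOutflow_add (f - g) g v
  rw [tsub_add_cancel_of_le hgf, netOutflow_eq_zero_iff.2 (hf.2 v hs ht),
    netOutflow_eq_zero_iff.2 (hg.2 v hs ht)] at hsplit
  rw [← netOutflow_eq_zero_iff]
  linarith

end IsBalancedOn

end NetOutflow

section WalkFlowBalance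

variable {W : Type*} [Fintype W] [DecidableEq W]

lemma sum_walkFlow_in (l : List W) (x : W) : ∑ u, walkFlow l (u, x) = l.tail.count x := by
  induction l using List.twoStepInduction with
  | nil => simp [walkFlow]
  | singleton a => simp [walkFlow]
  | cons_cons a b l _ ih =>
    have := ih b
    by_cases hb : b = x <;> simp_all [walkFlow, List.count_cons, Finset.sum_add_distrib]

lemma sum_walkFlow_out (l : List W) (x : W) : ∑ u, walkFlow l (x, u) = l.dropLast.count x := by
  induction l using List.twoStepInduction with
  | nil => simp [walkFlow]
  | singleton a => simp [walkFlow]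
  | cons_cons a b l _ ih =>
    have := ih b
    by_cases ha : a = x <;> simp_all [walkFlow, List.count_cons, Finset.sum_add_distrib]

lemma netOutflow_walkFlow (l : List W) (x : W) :
    netOutflow (walkFlow l) x =
      (if l.head? = some x then 1 else 0) - (if l.getLast? = some x then 1 else 0) := by
  cases l with
  | nil => simp [netOutflow, walkFlow]
  | cons a r =>
    have hcount := congrArg (List.count x) (List.dropLast_append_getLast (List.cons_ne_nil a r))
    rw [List.count_append, List.count_singleton, List.count_cons] at hcount
    simp only [netOutflow, ← Nat.cast_sum, sum_walkFlow_in, sum_walkFlow_out,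
      List.getLast?_eq_some_getLast (List.cons_ne_nil a r), List.head?_cons, List.tail_cons,
      Option.some_inj]
    split_ifs at hcount ⊢ <;> simp_all
    omega

lemma netOutflow_walksFlow {Q : Multiset (List W)} {s t : W} (hst : s ≠ t)
    (hQ : ∀ q ∈ Q, q.head? = some s ∧ q.getLast? = some t) :
    netOutflow (walksFlow Q) s = Multiset.card Q := by
  induction Q using Multiset.induction_on with
  | empty => simp [netOutflow]
  | cons q Q ih =>
    obtain ⟨hs, ht⟩ := hQ q (Multiset.mem_cons_self q Q)
    rw [walksFlow_cons, netOutflow_add, netOutflow_walkFlow, hs, ht,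
      ih fun q' hq' => hQ q' (Multiset.mem_cons_of_mem hq')]
    simp [hst.symm, add_comm]

lemma isBalancedOn_walkFlow {N : FlowNet W} {l : List W}
    (hl : l.IsChain fun x y => (x, y) ∈ N.E) (hs : l.head? = some N.s)
    (ht : l.getLast? = some N.t) : IsBalancedOn N (walkFlow l) := by
  refine ⟨fun e he => List.count_eq_zero.2 fun hmem => he (hl.rel_of_mem_pathEdges hmem),
    fun v hvs hvt => ?_⟩
  rw [← netOutflow_eq_zero_iff, netOutflow_walkFlow, hs, ht]
  simp [hvs.symm, hvt.symm]

lemma isBalancedOn_walksFlow {N : FlowNet W} {Q : Multiset (List W)}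
    (hQ : ∀ q ∈ Q, IsBalancedOn N (walkFlow q)) : IsBalancedOn N (walksFlow Q) := by
  induction Q using Multiset.induction_on with
  | empty => simpa using IsBalancedOn.zero
  | cons q Q ih =>
    rw [walksFlow_cons]
    exact (hQ q (Multiset.mem_cons_self q Q)).add
      (ih fun q' hq' => hQ q' (Multiset.mem_cons_of_mem hq'))

end WalkFlowBalance

section Reduction

variable {V : Type*}

def splitPath : List V → List (FR V)
  | [] => [fsnk]
  | v :: p => vinF v :: voutF v :: splitPath p

def liftPath (p : List V) : List (FR V) := fsrc :: splitPath p

@[simp] lemma fsrc_not_mem_splitPath (p : List V) : fsrc ∉ splitPath p := by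
  induction p <;> simp_all [splitPath, vinF, voutF, fsrc, fsnk]

@[simp] lemma vinF_mem_splitPath {p : List V} {v : V} : vinF v ∈ splitPath p ↔ v ∈ p := by
  induction p <;> simp_all [splitPath, vinF, voutF, fsnk]

@[simp] lemma voutF_mem_splitPath {p : List V} {v : V} : voutF v ∈ splitPath p ↔ v ∈ p := by
  induction p <;> simp_all [splitPath, vinF, voutF, fsnk]

@[simp] lemma head?_liftPath (p : List V) : (liftPath p).head? = some fsrc := rfl

lemma getLast?_splitPath (p : List V) : (splitPath p).getLast? = some fsnk := by
  induction p with
  | nil => rfl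
  | cons v p ih => simp [splitPath, List.getLast?_cons, ih]

@[simp] lemma getLast?_liftPath (p : List V) : (liftPath p).getLast? = some fsnk := by
  simp [liftPath, List.getLast?_cons, getLast?_splitPath]

lemma nodup_splitPath {p : List V} (hp : p.Nodup) : (splitPath p).Nodup := by
  induction p with
  | nil => simp [splitPath]
  | cons v p ih =>
    rw [List.nodup_cons] at hp
    simp only [splitPath, List.nodup_cons, List.mem_cons, vinF_mem_splitPath,
      voutF_mem_splitPath, hp.1, ih hp.2]
    simp [vinF, voutF]

lemma nodup_liftPath {p : List V} (hp : p.Nodup) : (liftPath p).Nodup :=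
  List.nodup_cons.2 ⟨fsrc_not_mem_splitPath p, nodup_splitPath hp⟩

lemma vinF_voutF_mem_pathEdges_splitPath {p : List V} {v : V} (hv : v ∈ p) :
    (vinF v, voutF v) ∈ pathEdges (splitPath p) := by
  induction p with
  | nil => simp at hv
  | cons w p ih =>
    rcases List.mem_cons.1 hv with rfl | hv
    · simp [splitPath]
    · cases p with
      | nil => simp at hv
      | cons => simp_all [splitPath]

lemma vinF_voutF_mem_pathEdges_liftPath {p : List V} {v : V} :
    (vinF v, voutF v) ∈ pathEdges (liftPath p) ↔ v ∈ p := by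
  refine ⟨fun h => ?_, fun hv => ?_⟩
  · have h := fst_mem_of_mem_pathEdges h
    simp only [liftPath, List.mem_cons, vinF_mem_splitPath] at h
    exact h.resolve_left (by simp [vinF, fsrc])
  · cases p with
    | nil => simp at hv
    | cons w p => exact List.mem_cons_of_mem _ (vinF_voutF_mem_pathEdges_splitPath hv)

lemma one_le_walksFlow_map_liftPath [DecidableEq V] {P : Multiset (List V)} {v : V} :
    1 ≤ walksFlow (P.map liftPath) (vinF v, voutF v) ↔ ∃ p ∈ P, v ∈ p := by
  rw [Nat.one_le_iff_ne_zero, ← Nat.pos_iff_ne_zero, walksFlow_pos_iff]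
  simp [vinF_voutF_mem_pathEdges_liftPath]

lemma sum_univ_FR [Fintype V] (g : FR V → ℕ) :
    ∑ x, g x = ∑ v, g (vinF v) + ∑ v, g (voutF v) + g fsrc + g fsnk := by
  simp only [Fintype.sum_sum_type, Fintype.sum_bool, vinF, voutF, fsrc, fsnk]
  ring

variable [Fintype V] [DecidableEq V] {E : Finset (V × V)}

lemma isChain_liftPath {v : V} {p : List V} (hp : (v :: p).IsChain (edgeRel E)) :
    (liftPath (v :: p)).IsChain fun x y => (x, y) ∈ (redNet E).E := by
  induction p generalizing v with
  | nil => simp [liftPath, splitPath, redNet, vinF, voutF, fsrc, fsnk]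
  | cons w p ih =>
    rw [List.isChain_cons_cons] at hp
    have hw : (splitPath (w :: p)).IsChain _ := (ih hp.2).tail
    have hvw : (v, w) ∈ E := hp.1
    simp only [liftPath, splitPath, List.isChain_cons_cons] at hw ⊢
    refine ⟨?_, ?_, ?_, hw⟩ <;> simp [redNet, vinF, voutF, fsrc, fsnk, hvw]

lemma isBalancedOn_walkFlow_liftPath {p : List V} (hp : IsPathOn (edgeRel E) p) :
    IsBalancedOn (redNet E) (walkFlow (liftPath p)) := by
  obtain ⟨v, q, rfl⟩ := List.exists_cons_of_ne_nil hp.1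
  exact isBalancedOn_walkFlow (isChain_liftPath hp.2.1) (head?_liftPath _) (getLast?_liftPath _)

lemma isFlow_redNet_iff {f : FR V × FR V → ℕ} :
    IsFlow (redNet E) f ↔ IsBalancedOn (redNet E) f ∧ ∀ v, 1 ≤ f (vinF v, voutF v) := by
  constructor
  · rintro ⟨hsupp, hdem, hcons⟩
    refine ⟨⟨hsupp, hcons⟩, fun v => ?_⟩
    simpa [redNet, redD, vinF, voutF] using
      hdem (vinF v, voutF v) (by simp [redNet, vinF, voutF])
  · rintro ⟨⟨hsupp, hcons⟩, hcov⟩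
    refine ⟨hsupp, fun e he => ?_, hcons⟩
    simp only [redNet, Finset.mem_union, Finset.mem_image, Finset.mem_univ, true_and] at he
    rcases he with ((⟨v, rfl⟩ | ⟨v, rfl⟩) | ⟨v, rfl⟩) | ⟨⟨u, v⟩, -, rfl⟩
    · simp [redNet, redD, fsrc]
    · simp [redNet, redD, voutF]
    · simpa [redNet, redD, vinF, voutF] using hcov v
    · simp [redNet, redD, vinF, voutF]

theorem isFlow_walksFlow_of_isPathCover {P : Multiset (List V)}
    (hP : IsPathCover (edgeRel E) P) :
    IsFlow (redNet E) (walksFlow (P.map liftPath)) ∧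
      flowSize (redNet E) (walksFlow (P.map liftPath)) = Multiset.card P := by
  refine ⟨isFlow_redNet_iff.2 ⟨isBalancedOn_walksFlow ?_, fun v => ?_⟩, ?_⟩
  · simpa using fun p hp => isBalancedOn_walkFlow_liftPath (hP.1 p hp)
  · exact one_le_walksFlow_map_liftPath.2 (hP.2 v)
  · show netOutflow _ fsrc = _
    rw [netOutflow_walksFlow (t := fsnk) (by simp [fsrc, fsnk]) (by simp), Multiset.card_map]

section Decomposition

variable {f : FR V × FR V → ℕ}

lemma IsBalancedOn.kirchhoff_vinF (hf : IsBalancedOn (redNet E) f) (v : V) :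
    f (fsrc, vinF v) + ∑ u, f (voutF u, vinF v) = f (vinF v, voutF v) := by
  have h := hf.2 (vinF v) (by simp [redNet, vinF, fsrc]) (by simp [redNet, vinF, fsnk])
  have hz : ∀ e ∉ (redNet E).E, f e = 0 := hf.1
  simp only [sum_univ_FR] at h
  simp (disch := simp [redNet, vinF, voutF, fsrc, fsnk]) only
    [hz, Finset.sum_const_zero, zero_add, add_zero] at h
  rw [Finset.sum_eq_single (f := fun b => f (vinF v, voutF b)) v
    (fun b _ hb => hz _ (by simp [redNet, vinF, voutF, fsrc, fsnk, Ne.symm hb])) (by simp)] at h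
  omega

lemma IsBalancedOn.kirchhoff_voutF (hf : IsBalancedOn (redNet E) f) (v : V) :
    f (vinF v, voutF v) = f (voutF v, fsnk) + ∑ u, f (voutF v, vinF u) := by
  have h := hf.2 (voutF v) (by simp [redNet, voutF, fsrc]) (by simp [redNet, voutF, fsnk])
  have hz : ∀ e ∉ (redNet E).E, f e = 0 := hf.1
  simp only [sum_univ_FR] at h
  simp (disch := simp [redNet, vinF, voutF, fsrc, fsnk]) only
    [hz, Finset.sum_const_zero, add_zero] at h
  rw [Finset.sum_eq_single (f := fun b => f (vinF b, voutF v)) v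
    (fun b _ hb => hz _ (by simp [redNet, vinF, voutF, fsrc, fsnk, hb])) (by simp)] at h
  omega

lemma IsBalancedOn.mem_of_voutF_vinF (hf : IsBalancedOn (redNet E) f) {u v : V}
    (h : f (voutF u, vinF v) ≠ 0) : (u, v) ∈ E := by
  by_contra huv
  exact h (hf.1 _ (by simpa [redNet, vinF, voutF, fsrc, fsnk] using huv))

lemma IsBalancedOn.exists_path_to_fsnk (hdag : IsDAG (edgeRel E))
    (hf : IsBalancedOn (redNet E) f) (v : V) (hv : f (vinF v, voutF v) ≠ 0) :
    ∃ p, (v :: p).IsChain (edgeRel E) ∧ ∀ e ∈ pathEdges (splitPath (v :: p)), f e ≠ 0 := by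
  induction v using hdag.swap.wellFounded.induction with
  | _ v ih =>
  have hk := hf.kirchhoff_voutF v
  by_cases ht : f (voutF v, fsnk) = 0
  · obtain ⟨u, -, hu⟩ : ∃ u ∈ univ, f (voutF v, vinF u) ≠ 0 :=
      Finset.exists_ne_zero_of_sum_ne_zero (by omega)
    have hvu := hf.mem_of_voutF_vinF hu
    have hu' : f (vinF u, voutF u) ≠ 0 := by
      rw [← hf.kirchhoff_vinF u]
      exact fun h => hu (Finset.sum_eq_zero_iff.1 (Nat.eq_zero_of_add_eq_zero h).2 v (mem_univ v))
    obtain ⟨p, hp, hpos⟩ := ih u hvu hu'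
    refine ⟨u :: p, List.IsChain.cons_cons hvu hp, ?_⟩
    -- the edges are `(vⁱⁿ, vᵒᵘᵗ)`, `(vᵒᵘᵗ, uⁱⁿ)` and those of `splitPath (u :: p)`
    rintro e (_ | ⟨_, _ | ⟨_, he⟩⟩)
    exacts [hv, hu, hpos e he]
  · refine ⟨[], List.isChain_singleton v, ?_⟩
    rintro e (_ | ⟨_, _ | ⟨_, he⟩⟩)
    exacts [hv, ht, nomatch he]

lemma IsBalancedOn.exists_fsrc_pos_of_vinF_voutF (hdag : IsDAG (edgeRel E))
    (hf : IsBalancedOn (redNet E) f) (v : V) (hv : f (vinF v, voutF v) ≠ 0) :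
    ∃ w, f (fsrc, vinF w) ≠ 0 := by
  induction v using hdag.wellFounded.induction with
  | _ v ih =>
  have hk := hf.kirchhoff_vinF v
  by_cases hs : f (fsrc, vinF v) = 0
  · obtain ⟨u, -, hu⟩ : ∃ u ∈ univ, f (voutF u, vinF v) ≠ 0 :=
      Finset.exists_ne_zero_of_sum_ne_zero (by omega)
    refine ih u (hf.mem_of_voutF_vinF hu) ?_
    rw [hf.kirchhoff_voutF u]
    exact fun h => hu (Finset.sum_eq_zero_iff.1 (Nat.eq_zero_of_add_eq_zero h).2 v (mem_univ v))
  · exact ⟨v, hs⟩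

lemma IsBalancedOn.exists_vinF_voutF_pos (hf : IsBalancedOn (redNet E) f) (h0 : f ≠ 0) :
    ∃ v, f (vinF v, voutF v) ≠ 0 := by
  obtain ⟨e, he⟩ := Function.ne_iff.1 h0
  have hmem : e ∈ (redNet E).E := by
    by_contra h
    exact he (hf.1 e h)
  simp only [redNet, Finset.mem_union, Finset.mem_image, Finset.mem_univ, true_and] at hmem
  rcases hmem with ((⟨v, rfl⟩ | ⟨v, rfl⟩) | ⟨v, rfl⟩) | ⟨⟨u, v⟩, -, rfl⟩
  · exact ⟨v, by rw [← hf.kirchhoff_vinF v]; exact fun h => he (Nat.eq_zero_of_add_eq_zero h).1⟩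
  · exact ⟨v, by rw [hf.kirchhoff_voutF v]; exact fun h => he (Nat.eq_zero_of_add_eq_zero h).1⟩
  · exact ⟨v, he⟩
  · refine ⟨u, ?_⟩
    rw [hf.kirchhoff_voutF u]
    exact fun h => he (Finset.sum_eq_zero_iff.1 (Nat.eq_zero_of_add_eq_zero h).2 v (mem_univ v))

lemma IsBalancedOn.exists_isPathOn_pos (hdag : IsDAG (edgeRel E))
    (hf : IsBalancedOn (redNet E) f) (h0 : f ≠ 0) :
    ∃ p, IsPathOn (edgeRel E) p ∧ ∀ e ∈ pathEdges (liftPath p), f e ≠ 0 := by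
  obtain ⟨v, hv⟩ := hf.exists_vinF_voutF_pos h0
  obtain ⟨w, hw⟩ := hf.exists_fsrc_pos_of_vinF_voutF hdag v hv
  have hw' : f (vinF w, voutF w) ≠ 0 := by
    rw [← hf.kirchhoff_vinF w]
    exact fun h => hw (Nat.eq_zero_of_add_eq_zero h).1
  obtain ⟨p, hp, hpos⟩ := hf.exists_path_to_fsnk hdag w hw'
  refine ⟨w :: p, ⟨List.cons_ne_nil w p, hp, hdag.nodup_of_isChain hp⟩, ?_⟩
  rintro e (_ | ⟨_, he⟩)
  exacts [hw, hpos e he]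

theorem IsBalancedOn.exists_walksFlow_eq (hdag : IsDAG (edgeRel E))
    (hf : IsBalancedOn (redNet E) f) :
    ∃ P : Multiset (List V), (∀ p ∈ P, IsPathOn (edgeRel E) p) ∧
      walksFlow (P.map liftPath) = f := by
  induction hn : ∑ e, f e using Nat.strong_induction_on generalizing f with
  | _ n ih =>
  by_cases h0 : f = 0
  · exact ⟨0, by simp, by simp [h0]⟩
  obtain ⟨p, hp, hpos⟩ := hf.exists_isPathOn_pos hdag h0
  set g := walkFlow (liftPath p)
  have hgf : g ≤ f := walkFlow_le (nodup_liftPath hp.2.2) hpos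
  have hg : 0 < ∑ e, g e := by
    obtain ⟨v, q, rfl⟩ := List.exists_cons_of_ne_nil hp.1
    refine lt_of_lt_of_le ?_
      (Finset.single_le_sum (fun e _ => Nat.zero_le (g e)) (mem_univ (fsrc, vinF v)))
    exact walkFlow_pos_iff.2 (by simp [liftPath, splitPath])
  have hlt : ∑ e, (f - g) e < n := by
    have hgf_sum : ∑ e, g e ≤ ∑ e, f e := Finset.sum_le_sum fun e _ => hgf e
    simp only [Pi.sub_apply]
    rw [Finset.sum_tsub_distrib _ fun e _ => hgf e]
    omega
  obtain ⟨P, hP, hPf⟩ := ih _ hlt (hf.tsub (isBalancedOn_walkFlow_liftPath hp) hgf) rfl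
  refine ⟨p ::ₘ P, Multiset.forall_mem_cons.2 ⟨hp, hP⟩, ?_⟩
  rw [Multiset.map_cons, walksFlow_cons, hPf]
  exact add_tsub_cancel_of_le hgf

end Decomposition

theorem exists_isPathCover_of_isFlow (hdag : IsDAG (edgeRel E)) {f : FR V × FR V → ℕ}
    (hf : IsFlow (redNet E) f) :
    ∃ P : Multiset (List V), IsPathCover (edgeRel E) P ∧ walksFlow (P.map liftPath) = f := by
  obtain ⟨hbal, hcov⟩ := isFlow_redNet_iff.1 hf
  obtain ⟨P, hP, rfl⟩ := hbal.exists_walksFlow_eq hdag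
  exact ⟨P, ⟨hP, fun v => one_le_walksFlow_map_liftPath.1 (hcov v)⟩, rfl⟩

end Reduction

lemma isPathCover_singletons {V : Type*} [Fintype V] (E : V → V → Prop) :
    IsPathCover E ((univ : Finset V).val.map fun v => [v]) := by
  refine ⟨fun p hp => ?_, fun v => ⟨[v], by simp, List.mem_singleton_self v⟩⟩
  obtain ⟨v, -, rfl⟩ := Multiset.mem_map.1 hp
  exact ⟨List.cons_ne_nil v [], List.isChain_singleton v, List.nodup_singleton v⟩

lemma Int.csInf_natCast_image {S : Set ℕ} (hS : S.Nonempty) :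
    sInf (((↑) : ℕ → ℤ) '' S) = ((sInf S : ℕ) : ℤ) :=
  IsLeast.csInf_eq ⟨Set.mem_image_of_mem _ (Nat.sInf_mem hS),
    Set.forall_mem_image.2 fun _ hn => Nat.cast_le.2 (Nat.sInf_le hn)⟩

/-- correspondence between path covers of a DAG and flows of its flow
reduction; in particular the width equals the minimum flow size. -/
theorem stmt_5 {V : Type*} [Fintype V] [DecidableEq V] (E : Finset (V × V))
    (hdag : IsDAG (edgeRel E)) :
    (∀ P : Multiset (List V), IsPathCover (edgeRel E) P →
        ∃ f, IsFlow (redNet E) f ∧ flowSize (redNet E) f = Multiset.card P) ∧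
    (∀ f, IsFlow (redNet E) f →
        ∃ P : Multiset (List V), IsPathCover (edgeRel E) P ∧
          (Multiset.card P : ℤ) = flowSize (redNet E) f) ∧
    (gwidth (edgeRel E) : ℤ)
      = sInf {z : ℤ | ∃ f, IsFlow (redNet E) f ∧ flowSize (redNet E) f = z} := by
  have hcover : ∀ P, IsPathCover (edgeRel E) P →
      ∃ f, IsFlow (redNet E) f ∧ flowSize (redNet E) f = Multiset.card P :=
    fun P hP => ⟨_, isFlow_walksFlow_of_isPathCover hP⟩
  have hflow : ∀ f, IsFlow (redNet E) f → ∃ P : Multiset (List V), IsPathCover (edgeRel E) P ∧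
      (Multiset.card P : ℤ) = flowSize (redNet E) f := by
    intro f hf
    obtain ⟨P, hP, rfl⟩ := exists_isPathCover_of_isFlow hdag hf
    exact ⟨P, hP, (isFlow_walksFlow_of_isPathCover hP).2.symm⟩
  refine ⟨hcover, hflow, ?_⟩
  have hsizes : {z : ℤ | ∃ f, IsFlow (redNet E) f ∧ flowSize (redNet E) f = z} =
      ((↑) : ℕ → ℤ) '' {n | ∃ P, IsPathCover (edgeRel E) P ∧ Multiset.card P = n} := by
    ext z
    constructor
    · rintro ⟨f, hf, rfl⟩
      obtain ⟨P, hP, hPf⟩ := hflow f hf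
      exact ⟨_, ⟨P, hP, rfl⟩, hPf⟩
    · rintro ⟨_, ⟨P, hP, rfl⟩, rfl⟩
      exact hcover P hP
  have hne : {n | ∃ P, IsPathCover (edgeRel E) P ∧ Multiset.card P = n}.Nonempty :=
    ⟨_, _, isPathCover_singletons _, rfl⟩
  rw [hsizes, Int.csInf_natCast_image hne]
  rfl
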